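/- For periodic sequences: let (Y_ℓ)_{ℓ∈ℤ} be i.i.d. N(0,σ²), n ≥ 1, and X[m] = exp((2πi/ε) Σ_{ℓ=−m}^{m} Y_ℓ) for 0 ≤ m ≤ n−1 (indices taken so all sums make sense). Then the expected periodic autocorrelation E[(1/n) Σ_{m=0}^{n−1} X[m+k] conj(X[m])] equals exp(−k σ² (2π/ε)²) for each integer 1 ≤ k ≤ n−1 (with m+k not reduced mod n). -/

import Mathlib

open MeasureTheory ProbabilityTheory Real
open scoped NNReal BigOperators

open Complex Finset

/-! With `t = 2π/ε`, the product `X[m+k] · conj X[m]` equals `exp (i t Σ Y_ℓ)`, the sum running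
over the `2k` indices `m < |ℓ| ≤ m + k`. By independence its expectation is the `2k`-th power of the
characteristic function `exp (-σ² t² / 2)` of `N(0, σ²)`, which no longer depends on `m`. -/

lemma cexp_mul_I_mul_conj_cexp_mul_I (t a b : ℝ) :
    cexp (t * a * I) * (starRingEnd ℂ) (cexp (t * b * I)) = cexp (t * ↑(a - b) * I) := by
  rw [← Complex.exp_conj, ← Complex.exp_add]
  congr 1
  simp only [map_mul, conj_ofReal, conj_I]
  push_cast
  ring

lemma Int.card_Icc_neg_add_sdiff_Icc_neg {a k : ℤ} (ha : 0 ≤ a) (hk : 0 ≤ k) :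
    (#(Icc (-(a + k)) (a + k) \ Icc (-a) a) : ℤ) = 2 * k := by
  rw [card_sdiff_of_subset (Icc_subset_Icc (by omega) (by omega)), Int.card_Icc, Int.card_Icc]
  omega

section

variable {Ω : Type*} {mΩ : MeasurableSpace Ω} {P : Measure Ω}

lemma integrable_cexp_mul_I [IsFiniteMeasure P] {f : Ω → ℝ} (hf : AEMeasurable f P) (t : ℝ) :
    Integrable (fun ω ↦ cexp (t * f ω * I)) P := by
  refine Integrable.of_bound (by fun_prop) 1 (ae_of_all _ fun ω ↦ ?_)
  rw [← ofReal_mul, norm_exp_ofReal_mul_I]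

lemma integral_cexp_sum_mul_I_of_iIndepFun_gaussianReal {ι : Type*} {Y : ι → Ω → ℝ} {v : ℝ≥0}
    (hindep : iIndepFun Y P) (hlaw : ∀ ℓ, P.map (Y ℓ) = gaussianReal 0 v) (S : Finset ι)
    (t : ℝ) :
    ∫ ω, cexp (t * ↑(∑ ℓ ∈ S, Y ℓ ω) * I) ∂P = ↑(rexp (-(#S * v * t ^ 2 / 2))) := by
  have hY : ∀ ℓ, AEMeasurable (Y ℓ) P :=
    fun ℓ ↦ aemeasurable_of_map_neZero (by rw [hlaw ℓ]; infer_instance)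
  have hsum : AEMeasurable (fun ω ↦ ∑ ℓ ∈ S, Y ℓ ω) P := by fun_prop
  rw [← integral_map (f := fun x : ℝ ↦ cexp (t * x * I)) hsum (by fun_prop), ← charFun_apply_real,
    (hindep.restrict S).charFun_map_fun_finsetSum_eq_prod fun ℓ _ ↦ hY ℓ]
  simp only [prod_apply, hlaw, charFun_gaussianReal, prod_const, ← Complex.exp_nat_mul]
  push_cast
  ring_nf

end

theorem expected_periodic_autocorrelation_general
    {Ω : Type*} [MeasureSpace Ω] [IsProbabilityMeasure (ℙ : Measure Ω)]
    (ε : ℝ) (σ : ℝ≥0)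
    (Y : ℤ → Ω → ℝ)
    (hindep : iIndepFun Y ℙ)
    (hlaw : ∀ ℓ, Measure.map (Y ℓ) ℙ = gaussianReal 0 (σ ^ 2))
    (X : ℤ → Ω → ℂ)
    (hX : ∀ n ω, X n ω =
      Complex.exp ((2 * Real.pi * Complex.I / ε) *
        ((∑ ℓ ∈ Finset.Icc (-n) n, Y ℓ ω : ℝ) : ℂ)))
    (n : ℕ) (hn : 1 ≤ n) (k : ℤ) (hk1 : 1 ≤ k) :
    ∫ ω, (1 / (n : ℂ)) * ∑ m ∈ Finset.range n,
        X ((m : ℤ) + k) ω * (starRingEnd ℂ) (X (m : ℤ) ω) ∂ℙ =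
      ((Real.exp (-(k : ℝ) * (σ : ℝ) ^ 2 * (2 * Real.pi / ε) ^ 2) : ℝ) : ℂ) := by
  set t : ℝ := 2 * π / ε
  have hY : ∀ ℓ, AEMeasurable (Y ℓ) ℙ :=
    fun ℓ ↦ aemeasurable_of_map_neZero (by rw [hlaw ℓ]; infer_instance)
  have hX' : ∀ a ω, X a ω = cexp (t * ↑(∑ ℓ ∈ Icc (-a) a, Y ℓ ω) * I) := fun a ω ↦ by
    rw [hX]
    push_cast [t]
    ring_nf
  have hprod : ∀ m : ℕ, (fun ω ↦ X (m + k) ω * (starRingEnd ℂ) (X m ω)) =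
      fun ω ↦ cexp (t * ↑(∑ ℓ ∈ Icc (-(m + k)) (m + k) \ Icc (-m) m, Y ℓ ω) * I) := by
    intro m
    ext ω
    rw [hX', hX', cexp_mul_I_mul_conj_cexp_mul_I,
      sum_sdiff_eq_sub (Icc_subset_Icc (by omega) (by omega))]
  have hterm : ∀ m : ℕ, ∫ ω, X (m + k) ω * (starRingEnd ℂ) (X m ω) ∂ℙ =
      ↑(rexp (-(k : ℝ) * σ ^ 2 * t ^ 2)) := by
    intro m
    have hcard := Int.card_Icc_neg_add_sdiff_Icc_neg (Int.natCast_nonneg m) (by omega : 0 ≤ k)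
    rw [hprod, integral_cexp_sum_mul_I_of_iIndepFun_gaussianReal hindep hlaw,
      show (#(Icc (-(m + k)) (m + k) \ Icc (-m) m) : ℝ) = 2 * k by exact_mod_cast hcard]
    push_cast
    ring_nf
  have hint : ∀ m ∈ range n, Integrable (fun ω ↦ X (m + k) ω * (starRingEnd ℂ) (X m ω)) ℙ :=
    fun m _ ↦ hprod m ▸ integrable_cexp_mul_I (by fun_prop) t
  rw [integral_const_mul, integral_finsetSum _ hint, sum_congr rfl fun m _ ↦ hterm m, sum_const,
    card_range, nsmul_eq_mul, one_div, inv_mul_cancel_left₀ (by norm_cast; omega)]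

theorem expected_periodic_autocorrelation
    {Ω : Type*} [MeasureSpace Ω] [IsProbabilityMeasure (ℙ : Measure Ω)]
    (ε : ℝ) (hε : 0 < ε) (σ : ℝ≥0) (hσ : 0 < σ)
    (Y : ℤ → Ω → ℝ)
    (hmeas : ∀ ℓ, Measurable (Y ℓ))
    (hindep : iIndepFun Y ℙ)
    (hlaw : ∀ ℓ, Measure.map (Y ℓ) ℙ = gaussianReal 0 (σ ^ 2))
    (X : ℤ → Ω → ℂ)
    (hX : ∀ n ω, X n ω =
      Complex.exp ((2 * Real.pi * Complex.I / ε) *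
        ((∑ ℓ ∈ Finset.Icc (-n) n, Y ℓ ω : ℝ) : ℂ)))
    (n : ℕ) (hn : 1 ≤ n) (k : ℤ) (hk1 : 1 ≤ k) (hk2 : k ≤ (n : ℤ) - 1) :
    ∫ ω, (1 / (n : ℂ)) * ∑ m ∈ Finset.range n,
        X ((m : ℤ) + k) ω * (starRingEnd ℂ) (X (m : ℤ) ω) ∂ℙ =
      ((Real.exp (-(k : ℝ) * (σ : ℝ) ^ 2 * (2 * Real.pi / ε) ^ 2) : ℝ) : ℂ) :=
  expected_periodic_autocorrelation_general ε σ Y hindep hlaw X hX n hn k hk1
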